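/- Let G = (V, E) be a multigraph with minimum cut value c ≥ 1, let α ≥ 1 be a real number, and let F ⊆ E be a set of edges such that the graph (V, E∖F) has exactly k connected components. Then the number of distinct α-minimum cuts of G whose edge sets are entirely contained in F is less than k^{2α}. -/

import Mathlib

open scoped Classical

/-- A multigraph on vertex type `V` is given by an edge-index type `E` together with a map
`ends : E → Sym2 V` assigning to each edge its (unordered) pair of endpoints; the hypothesis
`∀ e, ¬ (ends e).IsDiag` says that the two endpoints of every edge are distinct.
`survGraph ends F` is the simple graph on `V` whose adjacencies are given by the edges of the
multigraph that survive when the edges in `F` fail. -/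
def survGraph {V E : Type} (ends : E → Sym2 V) (F : Finset E) : SimpleGraph V :=
  SimpleGraph.fromRel (fun x y => ∃ e, e ∉ F ∧ ends e = s(x, y))

/-- The number of connected components of the graph surviving after the edges in `F` fail. -/
noncomputable def numComponents {V E : Type} (ends : E → Sym2 V) (F : Finset E) : ℕ :=
  Nat.card (survGraph ends F).ConnectedComponent

/-- Edge `e` crosses the 2-way cut determined by the vertex set `A` (one endpoint in `A`,
one endpoint outside `A`). -/
def crosses {V E : Type} (ends : E → Sym2 V) (A : Finset V) (e : E) : Prop :=
  (∃ x ∈ ends e, x ∈ A) ∧ (∃ x ∈ ends e, x ∉ A)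

/-- The edge set of the 2-way cut determined by the vertex set `A`. -/
noncomputable def cutEdges {V E : Type} [Fintype E] (ends : E → Sym2 V) (A : Finset V) :
    Finset E :=
  Finset.univ.filter (crosses ends A)

/-- The value of the 2-way cut determined by the vertex set `A`. -/
noncomputable def cutValue {V E : Type} [Fintype E] (ends : E → Sym2 V) (A : Finset V) : ℕ :=
  (cutEdges ends A).card

/-- When each edge fails independently with probability `p`, this is the probability that the
(random) set of failed edges is a member of `S`. -/
noncomputable def failurePr {E : Type} [Fintype E] (p : ℝ) (S : Finset (Finset E)) : ℝ :=
  ∑ F ∈ S, p ^ F.card * (1 - p) ^ (Fintype.card E - F.card)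

/-!
Let `N(F)` be the number of vertex sets `A` with `∅ ≠ A ≠ V`, `cutEdges A ⊆ F` and cut value
at most `αc` (every cut is counted twice, as `A` and as `Aᶜ`), and `k` the number of components
of `(V, E ∖ F)`. Such an `A` is a union of components, so `N(F) ≤ 2^k - 2`.

When `k > 2α`, the `k` cuts around single components have value at least `c` each, so at least
`kc/2` edges of `F` join two components, while the cuts counted by `N(F)` contain at most
`αc · N(F)` edges altogether. Hence some inter-component edge `e` lies in at most `2α N(F)/k`
of them; restoring `e` merges two components and loses only those cuts, so
`N(F) ≤ N(F ∖ {e}) · k / (k - 2α)`. Iterating down to `r = ⌈2α⌉` components gives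
`N(F) ≤ (2^r - 2) ∏_{i=r+1}^{k} i / (i - 2α) = (2^r - 2) · k^{(2α)} / r^{(2α)}` for the
falling powers `x^{(t)} = Γ(x + 1) / Γ(x + 1 - t)`, and log-convexity of `Γ` gives
`k^{(2α)} ≤ k^{2α}` and `r^{(2α)} ≥ r! ≥ 2^{r-1}`.
-/

open scoped Nat

theorem Nat.two_pow_pred_le_factorial : ∀ n : ℕ, 2 ^ (n - 1) ≤ n !
  | 0 => le_rfl
  | n + 1 => by simpa [add_comm] using Nat.factorial_mul_pow_le_factorial (m := 1) (n := n)

namespace Real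

/-- Wendel's inequality. -/
theorem Gamma_add_le_rpow_mul_Gamma {x s : ℝ} (hx : 0 < x) (hs₀ : 0 ≤ s) (hs₁ : s ≤ 1) :
    Gamma (x + s) ≤ x ^ s * Gamma x := by
  have hΓx := Gamma_pos_of_pos hx
  have hconv := convexOn_log_Gamma.2 (Set.mem_Ioi.2 hx) (Set.mem_Ioi.2 (by linarith : 0 < x + 1))
    (sub_nonneg.2 hs₁) hs₀ (sub_add_cancel 1 s)
  simp only [smul_eq_mul, Function.comp_apply, Gamma_add_one hx.ne',
    log_mul hx.ne' hΓx.ne'] at hconv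
  rw [show (1 - s) * x + s * (x + 1) = x + s by ring] at hconv
  rw [← log_le_log_iff (Gamma_pos_of_pos (by linarith)) (by positivity),
    log_mul (by positivity) hΓx.ne', log_rpow hx]
  linarith

/-- The falling power with real exponent; it equals `x (x - 1) ⋯ (x - t + 1)` for `t : ℕ`. -/
noncomputable def fallingRpow (x t : ℝ) : ℝ := Gamma (x + 1) / Gamma (x + 1 - t)

theorem fallingRpow_pos {x t : ℝ} (ht : 0 ≤ t) (htx : t < x + 1) : 0 < fallingRpow x t :=
  div_pos (Gamma_pos_of_pos (by linarith)) (Gamma_pos_of_pos (by linarith))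

theorem fallingRpow_add_one_mul {x t : ℝ} (ht : 0 ≤ t) (htx : t < x + 1) :
    fallingRpow (x + 1) t * (x + 1 - t) = fallingRpow x t * (x + 1) := by
  have h₁ : 0 < x + 1 - t := by linarith
  rw [fallingRpow, fallingRpow, show x + 1 + 1 - t = (x + 1 - t) + 1 by ring,
    Gamma_add_one (by linarith), Gamma_add_one h₁.ne']
  field_simp [(Gamma_pos_of_pos h₁).ne']

theorem fallingRpow_le_fallingRpow_add_one {x t : ℝ} (ht : 0 ≤ t) (htx : t < x + 1) :
    fallingRpow x t ≤ fallingRpow (x + 1) t := by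
  have h := fallingRpow_add_one_mul ht htx
  have h₀ := fallingRpow_pos ht (by linarith : t < x + 1 + 1)
  nlinarith

theorem fallingRpow_natCast_le_rpow {k : ℕ} {t : ℝ} (ht : 1 ≤ t) (htk : t ≤ k) :
    fallingRpow k t ≤ (k : ℝ) ^ t := by
  set m := ⌊t⌋₊
  have hm : (m : ℝ) ≤ t := Nat.floor_le (by linarith)
  have hmk : m ≤ k := Nat.floor_le_of_le htk
  have hk : (0 : ℝ) < k := by linarith
  have hpos : 0 < (k : ℝ) + 1 - t := by linarith
  have hfac : (k ! : ℝ) ≤ (k : ℝ) ^ m * (k - m)! := by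
    rw [← Nat.factorial_mul_descFactorial hmk, mul_comm]
    exact_mod_cast Nat.mul_le_mul_right _ (Nat.descFactorial_le_pow k m)
  have hwendel : ((k - m)! : ℝ) ≤ (k : ℝ) ^ (t - m) * Gamma (k + 1 - t) := by
    calc ((k - m)! : ℝ) = Gamma ((k + 1 - t) + (t - m)) := by
          rw [← Gamma_nat_eq_factorial, Nat.cast_sub hmk]; ring_nf
      _ ≤ (k + 1 - t) ^ (t - m) * Gamma (k + 1 - t) :=
          Gamma_add_le_rpow_mul_Gamma hpos (by linarith) (by linarith [Nat.lt_floor_add_one t])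
      _ ≤ (k : ℝ) ^ (t - m) * Gamma (k + 1 - t) := by
          gcongr; linarith
  rw [fallingRpow, div_le_iff₀ (Gamma_pos_of_pos hpos), Gamma_nat_eq_factorial]
  calc (k ! : ℝ) ≤ (k : ℝ) ^ m * ((k : ℝ) ^ (t - m) * Gamma (k + 1 - t)) :=
        hfac.trans (by gcongr)
    _ = (k : ℝ) ^ t * Gamma (k + 1 - t) := by
        rw [← mul_assoc, ← rpow_natCast, ← rpow_add hk, add_sub_cancel]

theorem factorial_le_fallingRpow {r : ℕ} {t : ℝ} (htr : t ≤ r) (hrt : r < t + 1) :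
    (r ! : ℝ) ≤ fallingRpow r t := by
  have hΓ : Gamma (r + 1 - t) ≤ 1 := by
    have h := Gamma_add_le_rpow_mul_Gamma one_pos (by linarith : 0 ≤ r - t) (by linarith)
    rwa [one_rpow, one_mul, Gamma_one, ← add_sub_assoc, add_comm 1] at h
  rw [fallingRpow, le_div_iff₀ (Gamma_pos_of_pos (by linarith)), Gamma_nat_eq_factorial]
  exact mul_le_of_le_one_right (by positivity) hΓ

end Real

theorem Finset.two_mul_card_image_pair_compl_le {α : Type*} [BooleanAlgebra α] [Nontrivial α]
    [DecidableEq α] (s : Finset α) (hs : ∀ a ∈ s, aᶜ ∈ s) :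
    2 * (s.image fun a => ({a, aᶜ} : Finset α)).card ≤ s.card := by
  refine Finset.mul_card_image_le_card s 2 fun p hp => ?_
  obtain ⟨a, ha, rfl⟩ := Finset.mem_image.1 hp
  calc 2 = ({a, aᶜ} : Finset α).card := (Finset.card_pair ne_compl_self).symm
    _ ≤ _ := by
      refine Finset.card_le_card fun b hb => Finset.mem_filter.2 ?_
      rcases Finset.mem_insert.1 hb with rfl | hb
      · exact ⟨ha, rfl⟩
      · rw [Finset.mem_singleton.1 hb]
        exact ⟨hs a ha, by rw [compl_compl, Finset.pair_comm]⟩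

theorem SimpleGraph.ConnectedComponent.card_lt_card_of_le_of_adj {V : Type*} [Finite V]
    {G G' : SimpleGraph V} (h : G ≤ G') {x y : V} (hadj : G'.Adj x y) (hxy : ¬G.Reachable x y) :
    Nat.card G'.ConnectedComponent < Nat.card G.ConnectedComponent := by
  have := Fintype.ofFinite G.ConnectedComponent
  have := Fintype.ofFinite G'.ConnectedComponent
  rw [Nat.card_eq_fintype_card, Nat.card_eq_fintype_card]
  refine Fintype.card_lt_of_surjective_not_injective _ (surjective_map_ofLE h) fun hinj => hxy ?_
  refine ConnectedComponent.exact (hinj ?_)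
  simpa only [map_mk, Hom.ofLE_apply] using ConnectedComponent.sound hadj.reachable

theorem Sym2.exists_eq_mk {α : Type*} (z : Sym2 α) : ∃ x y, z = s(x, y) :=
  z.ind fun x y => ⟨x, y, rfl⟩

section Multigraph

open Finset SimpleGraph Real

variable {V E : Type} (ends : E → Sym2 V)

theorem survGraph_adj {F : Finset E} {x y : V} :
    (survGraph ends F).Adj x y ↔ x ≠ y ∧ ∃ e ∉ F, ends e = s(x, y) := by
  simp [survGraph, Sym2.eq_swap]

theorem crosses_iff_of_eq_mk {A : Finset V} {e : E} {x y : V} (h : ends e = s(x, y)) :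
    crosses ends A e ↔ ¬(x ∈ A ↔ y ∈ A) := by
  simp only [crosses, h, Sym2.mem_iff, exists_eq_or_imp, exists_eq_left]
  tauto

theorem numComponents_erase_lt [Finite V] {F : Finset E} {e : E} {x y : V}
    (hxy : ends e = s(x, y)) (h : ¬(survGraph ends F).Reachable x y) :
    numComponents ends (F.erase e) < numComponents ends F := by
  have hle : survGraph ends F ≤ survGraph ends (F.erase e) := fun u v huv => by
    obtain ⟨hne, e', he', h'⟩ := (survGraph_adj ends).1 huv
    exact (survGraph_adj ends).2 ⟨hne, e', fun h => he' (mem_of_mem_erase h), h'⟩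
  have hne : x ≠ y := by rintro rfl; exact h (Reachable.refl x)
  exact ConnectedComponent.card_lt_card_of_le_of_adj hle
    ((survGraph_adj ends).2 ⟨hne, e, notMem_erase e F, hxy⟩) h

variable [Fintype E]

theorem cutEdges_subset_iff {A : Finset V} {F : Finset E} :
    cutEdges ends A ⊆ F ↔
      ∀ x y, (survGraph ends F).Reachable x y → (x ∈ A ↔ y ∈ A) := by
  constructor
  · rintro hA x y ⟨w⟩
    induction w with
    | nil => rfl
    | cons hadj _ ih =>
      obtain ⟨-, e, he, hxy⟩ := (survGraph_adj ends).1 hadj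
      refine Iff.trans ?_ ih
      by_contra hcr
      exact he (hA (mem_filter.2 ⟨mem_univ e, (crosses_iff_of_eq_mk ends hxy).2 hcr⟩))
  · intro hA e he
    by_contra heF
    obtain ⟨x, y, hxy⟩ := (ends e).exists_eq_mk
    have hcr := (crosses_iff_of_eq_mk ends hxy).1 (mem_filter.1 he).2
    have hne : x ≠ y := by rintro rfl; exact hcr Iff.rfl
    exact hcr (hA x y ((survGraph_adj ends).2 ⟨hne, e, heF, hxy⟩).reachable)

theorem sum_card_filter_mem_cutEdges_le (S : Finset (Finset V)) (D : Finset E) :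
    ∑ e ∈ D, #{A ∈ S | e ∈ cutEdges ends A} ≤ ∑ A ∈ S, cutValue ends A := by
  calc ∑ e ∈ D, #{A ∈ S | e ∈ cutEdges ends A}
      ≤ ∑ e, #{A ∈ S | e ∈ cutEdges ends A} := sum_le_sum_of_subset (subset_univ D)
    _ = ∑ A ∈ S, cutValue ends A := by
      simp only [card_filter, cutValue, cutEdges]
      rw [sum_comm]
      simp

theorem mem_iff_connectedComponentMk_mem_image {A : Finset V} {F : Finset E}
    (hA : cutEdges ends A ⊆ F) (v : V) :
    v ∈ A ↔ (survGraph ends F).connectedComponentMk v ∈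
      A.image (survGraph ends F).connectedComponentMk := by
  refine ⟨mem_image_of_mem _, fun h => ?_⟩
  obtain ⟨u, hu, huv⟩ := mem_image.1 h
  exact ((cutEdges_subset_iff ends).1 hA u v (ConnectedComponent.exact huv)).1 hu

variable [Fintype V] [DecidableEq V]

theorem cutEdges_compl (A : Finset V) : cutEdges ends Aᶜ = cutEdges ends A := by
  ext e
  simp only [cutEdges, crosses, mem_filter, mem_univ, true_and, mem_compl, not_not]
  tauto

noncomputable def approxMinCutSides (c : ℕ) (α : ℝ) (F : Finset E) : Finset (Finset V) :=
  Finset.univ.filter (fun A : Finset V =>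
    A.Nonempty ∧ Aᶜ.Nonempty ∧ (cutValue ends A : ℝ) ≤ α * c ∧ cutEdges ends A ⊆ F)

variable {ends} {c : ℕ} {α : ℝ} {F : Finset E}

theorem mem_approxMinCutSides {A : Finset V} :
    A ∈ approxMinCutSides ends c α F ↔
      A.Nonempty ∧ Aᶜ.Nonempty ∧ (cutValue ends A : ℝ) ≤ α * c ∧ cutEdges ends A ⊆ F := by
  simp [approxMinCutSides]

theorem compl_mem_approxMinCutSides {A : Finset V} (hA : A ∈ approxMinCutSides ends c α F) :
    Aᶜ ∈ approxMinCutSides ends c α F := by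
  obtain ⟨h₁, h₂, h₃, h₄⟩ := mem_approxMinCutSides.1 hA
  exact mem_approxMinCutSides.2
    ⟨h₂, by rwa [compl_compl], by rwa [cutValue, cutEdges_compl], by rwa [cutEdges_compl]⟩

theorem card_approxMinCutSides_le :
    #(approxMinCutSides ends c α F) ≤ 2 ^ numComponents ends F - 2 := by
  set G := survGraph ends F
  rcases (approxMinCutSides ends c α F).eq_empty_or_nonempty with hS | ⟨A₀, hA₀⟩
  · simp [hS]
  obtain ⟨v₀, -⟩ := (mem_approxMinCutSides.1 hA₀).1
  have hcard : #(((univ : Finset G.ConnectedComponent).powerset.erase univ).erase ∅) =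
      2 ^ numComponents ends F - 2 := by
    rw [card_erase_of_mem, card_erase_of_mem (mem_powerset_self _), card_powerset, card_univ,
      numComponents, Nat.card_eq_fintype_card]
    · rfl
    · exact mem_erase.2 ⟨(univ_nonempty_iff.2 ⟨G.connectedComponentMk v₀⟩).ne_empty.symm,
        empty_mem_powerset _⟩
  rw [← hcard]
  refine card_le_card_of_injOn (fun A => A.image G.connectedComponentMk) (fun A hA => ?_)
    (fun A hA B hB hAB => ?_)
  · obtain ⟨hne, ⟨b, hb⟩, -, hA⟩ := mem_approxMinCutSides.1 hA
    refine mem_erase.2 ⟨(hne.image _).ne_empty,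
      mem_erase.2 ⟨fun h => ?_, mem_powerset.2 (subset_univ _)⟩⟩
    simp only at h
    exact mem_compl.1 hb ((mem_iff_connectedComponentMk_mem_image ends hA b).2 (h ▸ mem_univ _))
  · simp only at hAB
    ext v
    rw [mem_iff_connectedComponentMk_mem_image ends (mem_approxMinCutSides.1 hA).2.2.2,
      mem_iff_connectedComponentMk_mem_image ends (mem_approxMinCutSides.1 hB).2.2.2, hAB]

variable (ends F) in
noncomputable def interComponentEdges : Finset E :=
  univ.filter fun e => ∃ x y, ends e = s(x, y) ∧ ¬(survGraph ends F).Reachable x y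

theorem mem_cutEdges_supp_iff {K : (survGraph ends F).ConnectedComponent} {e : E} {x y : V}
    (hxy : ends e = s(x, y)) :
    e ∈ cutEdges ends K.supp.toFinset ↔
      ¬((survGraph ends F).connectedComponentMk x = K ↔
        (survGraph ends F).connectedComponentMk y = K) := by
  simp only [cutEdges, mem_filter, mem_univ, true_and, crosses_iff_of_eq_mk ends hxy,
    Set.mem_toFinset, ConnectedComponent.mem_supp_iff]

theorem mem_interComponentEdges_of_mem_cutEdges_supp {K : (survGraph ends F).ConnectedComponent}
    {e : E} (he : e ∈ cutEdges ends K.supp.toFinset) : e ∈ interComponentEdges ends F := by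
  obtain ⟨x, y, hxy⟩ := (ends e).exists_eq_mk
  refine mem_filter.2 ⟨mem_univ e, x, y, hxy, fun hr => ?_⟩
  rw [mem_cutEdges_supp_iff hxy, ConnectedComponent.sound hr] at he
  exact he Iff.rfl

theorem card_filter_mem_cutEdges_supp_le_two (e : E) :
    #{K : (survGraph ends F).ConnectedComponent | e ∈ cutEdges ends K.supp.toFinset} ≤ 2 := by
  obtain ⟨x, y, hxy⟩ := (ends e).exists_eq_mk
  refine (card_le_card (t := {(survGraph ends F).connectedComponentMk x,
    (survGraph ends F).connectedComponentMk y}) fun K hK => ?_).trans card_le_two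
  rw [mem_filter, mem_cutEdges_supp_iff hxy] at hK
  rw [mem_insert, mem_singleton]
  tauto

theorem numComponents_mul_le_card_interComponentEdges
    (hmin : ∀ A : Finset V, A.Nonempty → Aᶜ.Nonempty → c ≤ cutValue ends A)
    (hk : 1 < numComponents ends F) :
    numComponents ends F * c ≤ #(interComponentEdges ends F) * 2 := by
  have hk' : 1 < Fintype.card (survGraph ends F).ConnectedComponent := by
    rwa [numComponents, Nat.card_eq_fintype_card] at hk
  rw [numComponents, Nat.card_eq_fintype_card, ← card_univ]
  refine card_mul_le_card_mul (fun K e => e ∈ cutEdges ends K.supp.toFinset) (fun K _ => ?_)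
    (fun e _ => by rw [bipartiteBelow]; convert card_filter_mem_cutEdges_supp_le_two e)
  have hsub : cutEdges ends K.supp.toFinset ⊆ interComponentEdges ends F := fun e he =>
    mem_interComponentEdges_of_mem_cutEdges_supp he
  rw [bipartiteAbove, filter_mem_eq_inter, inter_eq_right.2 hsub]
  obtain ⟨K', hK'⟩ := Fintype.exists_ne_of_one_lt_card hk' K
  obtain ⟨w, hw⟩ := K'.nonempty_supp
  refine hmin _ (K.nonempty_supp.mono fun v => by simp) ⟨w, ?_⟩
  rw [ConnectedComponent.mem_supp_iff] at hw
  simpa [ConnectedComponent.mem_supp_iff, hw] using hK'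

theorem exists_mem_interComponentEdges_mul_card_le (hc : 0 < c)
    (hmin : ∀ A : Finset V, A.Nonempty → Aᶜ.Nonempty → c ≤ cutValue ends A)
    (hα : 0 ≤ α)
    (hk : 1 < numComponents ends F) :
    ∃ e ∈ interComponentEdges ends F,
      (numComponents ends F : ℝ) *
          #{A ∈ approxMinCutSides ends c α F | e ∈ cutEdges ends A} ≤
        2 * α * #(approxMinCutSides ends c α F) := by
  have hD := numComponents_mul_le_card_interComponentEdges hmin hk
  set S := approxMinCutSides ends c α F
  set D := interComponentEdges ends F
  set k := numComponents ends F
  have hDne : D.Nonempty := card_pos.1 (by nlinarith)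
  have hdeg : (∑ e ∈ D, #{A ∈ S | e ∈ cutEdges ends A} : ℝ) ≤ #S * (α * c) := by
    calc (∑ e ∈ D, #{A ∈ S | e ∈ cutEdges ends A} : ℝ)
        ≤ ∑ A ∈ S, (cutValue ends A : ℝ) := by
          exact_mod_cast sum_card_filter_mem_cutEdges_le ends S D
      _ ≤ #S * (α * c) := by
          rw [← nsmul_eq_mul]
          exact sum_le_card_nsmul _ _ _ fun A hA => (mem_approxMinCutSides.1 hA).2.2.1
  refine exists_le_of_sum_le hDne ?_
  rw [← mul_sum, sum_const, nsmul_eq_mul]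
  calc (k : ℝ) * ∑ e ∈ D, (#{A ∈ S | e ∈ cutEdges ends A} : ℝ)
      ≤ k * (#S * (α * c)) := by gcongr
    _ = α * #S * (k * c) := by ring
    _ ≤ α * #S * (#D * 2) := mul_le_mul_of_nonneg_left (by exact_mod_cast hD) (by positivity)
    _ = #D * (2 * α * #S) := by ring

theorem exists_numComponents_erase_lt_and_card_mul_le (hc : 0 < c)
    (hmin : ∀ A : Finset V, A.Nonempty → Aᶜ.Nonempty → c ≤ cutValue ends A)
    (hα : 0 ≤ α)
    (hk : 1 < numComponents ends F) :
    ∃ e, numComponents ends (F.erase e) < numComponents ends F ∧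
      (#(approxMinCutSides ends c α F) : ℝ) * (numComponents ends F - 2 * α) ≤
        #(approxMinCutSides ends c α (F.erase e)) * numComponents ends F := by
  obtain ⟨e, he, hdeg⟩ := exists_mem_interComponentEdges_mul_card_le hc hmin hα hk
  obtain ⟨x, y, hxy, hr⟩ := (mem_filter.1 he).2
  refine ⟨e, numComponents_erase_lt ends hxy hr, ?_⟩
  set S := approxMinCutSides ends c α F
  have hsplit :
      #S ≤ #{A ∈ S | e ∈ cutEdges ends A} + #(approxMinCutSides ends c α (F.erase e)) := by
    rw [← card_filter_add_card_filter_not (fun A => e ∈ cutEdges ends A)]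
    refine Nat.add_le_add_left (card_le_card fun A hA => ?_) _
    obtain ⟨hA, heA⟩ := mem_filter.1 hA
    obtain ⟨h₁, h₂, h₃, h₄⟩ := mem_approxMinCutSides.1 hA
    exact mem_approxMinCutSides.2 ⟨h₁, h₂, h₃, subset_erase.2 ⟨h₄, heA⟩⟩
  have := mul_le_mul_of_nonneg_left (Nat.cast_le (α := ℝ).2 hsplit)
    (Nat.cast_nonneg (numComponents ends F))
  push_cast at this
  linarith

theorem card_approxMinCutSides_mul_fallingRpow_le (hc : 0 < c)
    (hmin : ∀ A : Finset V, A.Nonempty → Aᶜ.Nonempty → c ≤ cutValue ends A) (hα : 0 < α)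
    {r : ℕ} (hr : 2 * α ≤ r) {k : ℕ} (hrk : r ≤ k) (F : Finset E)
    (hF : numComponents ends F ≤ k) :
    (#(approxMinCutSides ends c α F) : ℝ) * fallingRpow r (2 * α) ≤
      ((2 ^ r - 2 : ℕ) : ℝ) * fallingRpow k (2 * α) := by
  have hfr : 0 ≤ fallingRpow r (2 * α) := (fallingRpow_pos (by linarith) (by linarith)).le
  have hr : 0 < r := by exact_mod_cast (by linarith : (0 : ℝ) < r)
  induction k, hrk using Nat.le_induction generalizing F with
  | base =>
    gcongr
    exact_mod_cast card_approxMinCutSides_le.trans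
      (Nat.sub_le_sub_right (Nat.pow_le_pow_right two_pos hF) 2)
  | succ k hrk ih =>
    have hk : 2 * α < k + 1 := by linarith [(Nat.cast_le (α := ℝ)).2 hrk]
    have hstep := fallingRpow_add_one_mul (x := k) (by linarith) hk
    have hmono := fallingRpow_le_fallingRpow_add_one (x := k) (by linarith) hk
    push_cast
    rcases hF.lt_or_eq with hlt | heq
    · exact (ih F (Nat.lt_succ_iff.1 hlt)).trans (by gcongr)
    obtain ⟨e, he, hN⟩ := exists_numComponents_erase_lt_and_card_mul_le hc hmin hα.le
      (by rw [heq]; omega)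
    rw [heq] at he hN
    push_cast at hN
    have ih' := ih (F.erase e) (by omega)
    refine le_of_mul_le_mul_right ?_ (by linarith : 0 < (k : ℝ) + 1 - 2 * α)
    calc _ ≤ (#(approxMinCutSides ends c α (F.erase e)) : ℝ) * fallingRpow r (2 * α) * (k + 1) :=
          by linarith [mul_le_mul_of_nonneg_right hN hfr]
      _ ≤ ((2 ^ r - 2 : ℕ) : ℝ) * fallingRpow k (2 * α) * (k + 1) := by gcongr
      _ = _ := by rw [mul_assoc, ← hstep]; ring

theorem card_approxMinCutSides_lt (hc : 0 < c)
    (hmin : ∀ A : Finset V, A.Nonempty → Aᶜ.Nonempty → c ≤ cutValue ends A)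
    (hα : 1 ≤ α) (hk : 0 < numComponents ends F) :
    (#(approxMinCutSides ends c α F) : ℝ) < 2 * (numComponents ends F : ℝ) ^ (2 * α) := by
  set k := numComponents ends F
  set r := ⌈2 * α⌉₊
  have htr : 2 * α ≤ r := Nat.le_ceil _
  have hrt : (r : ℝ) < 2 * α + 1 := Nat.ceil_lt_add_one (by linarith)
  have hr : 1 ≤ r := by exact_mod_cast (by linarith : (1 : ℝ) ≤ r)
  have hk₁ : (1 : ℝ) ≤ k := by exact_mod_cast hk
  rcases le_or_gt r k with hrk | hkr
  · have hrk' : (r : ℝ) ≤ k := by exact_mod_cast hrk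
    have hmain := card_approxMinCutSides_mul_fallingRpow_le hc hmin (by linarith) htr hrk F le_rfl
    have hfr : (2 : ℝ) ^ (r - 1) ≤ fallingRpow r (2 * α) :=
      le_trans (by exact_mod_cast r.two_pow_pred_le_factorial) (factorial_le_fallingRpow htr hrt)
    have hfk := fallingRpow_natCast_le_rpow (by linarith) (htr.trans hrk')
    have hfk₀ := fallingRpow_pos (x := k) (t := 2 * α) (by linarith) (by linarith)
    have h2r : (2 : ℝ) ^ r = 2 * 2 ^ (r - 1) := by rw [← pow_succ', Nat.sub_add_cancel hr]
    rw [Nat.cast_sub (Nat.le_self_pow (by omega) 2), Nat.cast_pow, Nat.cast_ofNat, h2r] at hmain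
    refine lt_of_mul_lt_mul_right ?_ (by positivity : (0 : ℝ) ≤ 2 ^ (r - 1))
    calc (#(approxMinCutSides ends c α F) : ℝ) * 2 ^ (r - 1)
        ≤ #(approxMinCutSides ends c α F) * fallingRpow r (2 * α) := by gcongr
      _ ≤ (2 * 2 ^ (r - 1) - 2) * fallingRpow k (2 * α) := hmain
      _ < 2 * 2 ^ (r - 1) * fallingRpow k (2 * α) := by gcongr; linarith
      _ ≤ 2 * 2 ^ (r - 1) * k ^ (2 * α) := by gcongr
      _ = 2 * k ^ (2 * α) * 2 ^ (r - 1) := by ring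
  · have hkt : (k : ℝ) ≤ 2 * α := by
      have : (k : ℝ) + 1 ≤ r := by exact_mod_cast hkr
      linarith
    have hN : #(approxMinCutSides ends c α F) < 2 ^ k :=
      card_approxMinCutSides_le.trans_lt (Nat.sub_lt (by positivity) two_pos)
    calc (#(approxMinCutSides ends c α F) : ℝ) < 2 ^ k := by exact_mod_cast hN
      _ = 2 * 2 ^ (k - 1) := by rw [← pow_succ', Nat.sub_add_cancel hk]
      _ ≤ 2 * k ^ k := by
          gcongr
          exact_mod_cast k.two_pow_pred_le_factorial.trans k.factorial_le_pow
      _ ≤ 2 * (k : ℝ) ^ (2 * α) := by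
          rw [← rpow_natCast]
          gcongr

end Multigraph

theorem stmt17_general {V E : Type} [Fintype V] [DecidableEq V] [Fintype E]
    (ends : E → Sym2 V)
    (c : ℕ) (hc : 1 ≤ c)
    (hmin : ∀ A : Finset V, A.Nonempty → Aᶜ.Nonempty → c ≤ cutValue ends A)
    (hex : ∃ A : Finset V, A.Nonempty ∧ Aᶜ.Nonempty ∧ cutValue ends A = c)
    (α : ℝ) (hα : 1 ≤ α)
    (F : Finset E) (k : ℕ) (hk : numComponents ends F = k) :
    (((Finset.univ.filter (fun A : Finset V =>
          A.Nonempty ∧ Aᶜ.Nonempty ∧ (cutValue ends A : ℝ) ≤ α * c ∧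
            cutEdges ends A ⊆ F)).image
            (fun A => ({A, Aᶜ} : Finset (Finset V)))).card : ℝ)
      < (k : ℝ) ^ (2 * α) := by
  obtain ⟨-, ⟨v, -⟩, -⟩ := hex
  have : Nonempty V := ⟨v⟩
  have : Nonempty (survGraph ends F).ConnectedComponent :=
    ⟨(survGraph ends F).connectedComponentMk v⟩
  have hsides := card_approxMinCutSides_lt (F := F) hc hmin hα Nat.card_pos
  have hpairs := Finset.two_mul_card_image_pair_compl_le (approxMinCutSides ends c α F)
    fun _ => compl_mem_approxMinCutSides
  rw [← hk]
  change (((approxMinCutSides ends c α F).image _).card : ℝ) < _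
  have := (Nat.cast_le (α := ℝ)).2 hpairs
  push_cast at this
  linarith

/-- Let `G = (V, E)` be a multigraph with minimum cut value `c ≥ 1`, let
`α ≥ 1` be real, and let `F ⊆ E` be a set of edges such that `(V, E ∖ F)` has exactly `k`
connected components.  Then the number of distinct `α`-minimum cuts of `G` whose edge sets are
contained in `F` is less than `k ^ (2α)`. -/
theorem stmt17 {V E : Type} [Fintype V] [DecidableEq V] [Fintype E]
    (ends : E → Sym2 V) (hnd : ∀ e, ¬ (ends e).IsDiag)
    (c : ℕ) (hc : 1 ≤ c)
    (hmin : ∀ A : Finset V, A.Nonempty → Aᶜ.Nonempty → c ≤ cutValue ends A)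
    (hex : ∃ A : Finset V, A.Nonempty ∧ Aᶜ.Nonempty ∧ cutValue ends A = c)
    (α : ℝ) (hα : 1 ≤ α)
    (F : Finset E) (k : ℕ) (hk : numComponents ends F = k) :
    (((Finset.univ.filter (fun A : Finset V =>
          A.Nonempty ∧ Aᶜ.Nonempty ∧ (cutValue ends A : ℝ) ≤ α * c ∧
            cutEdges ends A ⊆ F)).image
            (fun A => ({A, Aᶜ} : Finset (Finset V)))).card : ℝ)
      < (k : ℝ) ^ (2 * α) :=
  stmt17_general ends c hc hmin hex α hα F k hk
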